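/- Let n ≥ 2, X = (x₁,…,xₙ) with xᵢ ≥ 0, and weight vectors α, β with positive entries summing to 1. Then E_α X − Π_α X ≤ max_k(α_k/β_k) · min{1/α_min, 1/β_min} · Var_β(X^{1/2}). -/

import Mathlib

/-!
With `yᵢ = √xᵢ`, the core estimate is `(Σ wᵢ yᵢ)² ≤ (1 - m) Σ wᵢ yᵢ² + m Π (yᵢ²) ^ wᵢ` whenever
all weights satisfy `wᵢ ≥ m`, which says `E_w X - Π_w X ≤ Var_w(X^{1/2}) / m`. It is proved by
induction on the number of points: split off one point of weight `p` and renormalise the others.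
The resulting two-variable inequality splits into two cases, each closed by a weighted AM-GM
inequality (three-term in one case, Bernoulli's inequality in the other).

With `c = max_k αₖ / βₖ` we have `α ≤ c β`, and this transfers both sides: `Var_α ≤ c Var_β`, and
`E_α X - Π_α X ≤ c (E_β X - Π_β X)` because `Π_β X` is a weighted geometric mean of the `xᵢ` and
of `Π_α X`. Combining the core estimate for `α` with the first transfer, or for `β` with the
second, gives the two bounds in the minimum.
-/

open Finset Real

noncomputable def amgmGap {ι : Type*} [Fintype ι] (w x : ι → ℝ) : ℝ :=
  ∑ i, w i * x i - ∏ i, x i ^ w i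

def weightedVariance {ι : Type*} [Fintype ι] (w y : ι → ℝ) : ℝ :=
  ∑ i, w i * y i ^ 2 - (∑ i, w i * y i) ^ 2

theorem one_sub_mul_one_sub_le_mul_rpow {m p r : ℝ} (hm : 0 < m) (hmp : m ≤ p) (hpm : p + m ≤ 1)
    (hr : 1 - p ≤ (1 - p - m) * r) : (1 - p) * (1 - m) ≤ (1 - p - m) * r ^ (2 * p) := by
  have hp : 0 < p := hm.trans_le hmp
  have hr1 : 1 ≤ r := by nlinarith
  have hr0 : 0 < r := by linarith
  rcases le_or_gt 1 (2 * p) with hp2 | hp2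
  · have : r ≤ r ^ (2 * p) := by
      simpa using rpow_le_rpow_of_exponent_le hr1 hp2
    nlinarith
  · set D := 1 + (1 - 2 * p) * (r - 1) with hDdef
    have hD : 0 < D := by nlinarith
    have hbern : r ^ (1 - 2 * p) ≤ D := by
      simpa using rpow_one_add_le_one_add_mul_self (s := r - 1) (by linarith) (by linarith)
        (by linarith : 1 - 2 * p ≤ 1)
    have hsplit : r = r ^ (2 * p) * r ^ (1 - 2 * p) := by
      rw [← rpow_add hr0]; norm_num
    have hlin : (1 - p) * (1 - m) * D ≤ (1 - p - m) * r := by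
      have ha : 0 < 1 - p - m := by nlinarith
      have hcoef : 0 ≤ p * (2 - 2 * p - 3 * m + 2 * m * p) :=
        mul_nonneg hp.le (by nlinarith)
      have hconst : 0 < m * p * ((1 - 2 * m) * (1 - p)) :=
        mul_pos (mul_pos hm hp) (mul_pos (by linarith) (by linarith))
      -- `(1-p-m)` times the difference of the two sides equals
      -- `p (2 - 2p - 3m + 2mp) ((1-p-m) r - (1-p)) + m p (1-2m)(1-p)`
      refine le_of_sub_nonneg (nonneg_of_mul_nonneg_right ?_ ha)
      rw [hDdef]
      nlinarith [mul_nonneg hcoef (sub_nonneg.2 hr)]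
    refine le_of_mul_le_mul_right ?_ hD
    calc (1 - p) * (1 - m) * D ≤ (1 - p - m) * r := hlin
      _ ≤ (1 - p - m) * (r ^ (2 * p) * D) := by
          gcongr
          · linarith
          · calc r = _ := hsplit
              _ ≤ _ := by gcongr
      _ = _ := by ring

theorem sq_mul_le_mul_rpow_mul_rpow {m p t h : ℝ} (hm : 0 < m) (hmp : m ≤ p) (hpm : p + m ≤ 1)
    (ht : 0 ≤ t) (hh : 0 ≤ h) (hth : (1 - p) * h ≤ (1 - p - m) * t) :
    (1 - p) * (1 - m) * h ^ 2 ≤ (1 - p - m) * ((t ^ 2) ^ p * (h ^ 2) ^ (1 - p)) := by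
  rcases hh.eq_or_lt with rfl | hh
  · have : 0 ≤ 1 - p - m := by linarith
    rw [zero_pow two_ne_zero, mul_zero]
    positivity
  have hK : (t ^ 2) ^ p * (h ^ 2) ^ (1 - p) = (t / h) ^ (2 * p) * h ^ 2 := by
    rw [div_rpow ht hh.le, rpow_mul ht, rpow_mul hh.le, rpow_two, rpow_two,
      rpow_sub (by positivity), rpow_one]
    ring
  rw [hK, ← mul_assoc]
  exact mul_le_mul_of_nonneg_right
    (one_sub_mul_one_sub_le_mul_rpow hm hmp hpm (by rwa [mul_div_assoc', le_div_iff₀ hh]))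
    (sq_nonneg h)

theorem two_mul_mul_le_add_rpow {m p t h : ℝ} (hm : 0 < m) (hmp : m ≤ p) (hpm : p + m ≤ 1)
    (ht : 0 ≤ t) (hh : 0 ≤ h) :
    2 * p * (1 - p) * (t * h) ≤
      p * (1 - m - p) * t ^ 2 + (p - m) * (1 - p) * h ^ 2 +
        m * ((t ^ 2) ^ p * (h ^ 2) ^ (1 - p)) := by
  have hp : 0 < p := hm.trans_le hmp
  set W := 2 * p * (1 - p) with hWdef
  have hW : 0 < W := by rw [hWdef]; nlinarith
  have ht2 := sq_nonneg t
  have hh2 := sq_nonneg h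
  have hgm : (t ^ 2) ^ (p * (1 - m - p) / W) * (h ^ 2) ^ ((p - m) * (1 - p) / W) *
      ((t ^ 2) ^ p * (h ^ 2) ^ (1 - p)) ^ (m / W) = t * h := by
    have e₁ : p * (1 - m - p) / W + p * (m / W) = 1 / 2 := by field_simp; ring
    have e₂ : (p - m) * (1 - p) / W + (1 - p) * (m / W) = 1 / 2 := by field_simp; ring
    rw [mul_rpow (rpow_nonneg ht2 _) (rpow_nonneg hh2 _), ← rpow_mul ht2, ← rpow_mul hh2,
      mul_mul_mul_comm, ← rpow_add' ht2 (by rw [e₁]; norm_num),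
      ← rpow_add' hh2 (by rw [e₂]; norm_num), e₁, e₂, ← sqrt_eq_rpow, ← sqrt_eq_rpow,
      sqrt_sq ht, sqrt_sq hh]
  have key := geom_mean_le_arith_mean3_weighted (w₁ := p * (1 - m - p) / W)
    (w₂ := (p - m) * (1 - p) / W) (w₃ := m / W) (p₃ := (t ^ 2) ^ p * (h ^ 2) ^ (1 - p))
    (div_nonneg (mul_nonneg hp.le (by linarith)) hW.le)
    (div_nonneg (mul_nonneg (by linarith) (by linarith)) hW.le) (by positivity) ht2 hh2
    (mul_nonneg (rpow_nonneg ht2 p) (rpow_nonneg hh2 (1 - p))) (by field_simp; ring)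
  rw [hgm] at key
  calc 2 * p * (1 - p) * (t * h) = W * (t * h) := rfl
    _ ≤ W * (p * (1 - m - p) / W * t ^ 2 + (p - m) * (1 - p) / W * h ^ 2 +
        m / W * ((t ^ 2) ^ p * (h ^ 2) ^ (1 - p))) := by gcongr
    _ = _ := by field_simp

theorem sq_mul_add_one_sub_mul_le {m p t h ν S : ℝ} (hm : 0 < m) (hmp : m ≤ p) (hpm : p + m ≤ 1)
    (ht : 0 ≤ t) (hh : 0 ≤ h) (hhS : h ^ 2 ≤ S)
    (hν : (1 - p) * ν ^ 2 ≤ (1 - p - m) * S + m * h ^ 2) :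
    (p * t + (1 - p) * ν) ^ 2 ≤
      (1 - m) * (p * t ^ 2 + (1 - p) * S) + m * ((t ^ 2) ^ p * (h ^ 2) ^ (1 - p)) := by
  have hp : 0 < p := hm.trans_le hmp
  rcases le_or_gt ((1 - p - m) * t) ((1 - p) * h) with hth | hth
  · have hcross : 2 * t * (ν - h) ≤ S - h ^ 2 := by
      rcases le_or_gt ν h with hνh | hνh
      · nlinarith [mul_nonneg ht (sub_nonneg.2 hνh)]
      · have hsq : (1 - p) * (ν ^ 2 - h ^ 2) ≤ (1 - p - m) * (S - h ^ 2) := by linarith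
        have hsq_pos : 0 < (1 - p) * (ν ^ 2 - h ^ 2) :=
          mul_pos (by linarith) (by nlinarith)
        have ha : 0 < 1 - p - m := by nlinarith
        refine le_of_mul_le_mul_left ?_ ha
        calc (1 - p - m) * (2 * t * (ν - h)) ≤ (1 - p) * h * (2 * (ν - h)) := by
              nlinarith [mul_le_mul_of_nonneg_right hth (by linarith : (0:ℝ) ≤ 2 * (ν - h))]
          _ ≤ (1 - p) * (ν ^ 2 - h ^ 2) := by nlinarith
          _ ≤ _ := hsq
    nlinarith [two_mul_mul_le_add_rpow hm hmp hpm ht hh,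
      mul_le_mul_of_nonneg_left hcross (by nlinarith : 0 ≤ p * (1 - p))]
  · have ha : 0 < 1 - p - m := by nlinarith
    refine le_of_mul_le_mul_left ?_ ha
    -- times `1-p-m`, the difference of the two sides is at least `p ((1-p-m) t - (1-p) ν)²`
    nlinarith [mul_nonneg hp.le (sq_nonneg ((1 - p - m) * t - (1 - p) * ν)),
      mul_le_mul_of_nonneg_left hν (by nlinarith : 0 ≤ (1 - m) * (1 - p)),
      mul_le_mul_of_nonneg_left (sq_mul_le_mul_rpow_mul_rpow hm hmp hpm ht hh hth.le) hm.le]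

theorem sq_sum_mul_le_of_le_weights {ι : Type*} (s : Finset ι) {w y : ι → ℝ} {m : ℝ} (hm : 0 < m)
    (hw : ∀ i ∈ s, m ≤ w i) (hy : ∀ i ∈ s, 0 ≤ y i) (hws : ∑ i ∈ s, w i = 1) :
    (∑ i ∈ s, w i * y i) ^ 2 ≤
      (1 - m) * ∑ i ∈ s, w i * y i ^ 2 + m * ∏ i ∈ s, (y i ^ 2) ^ w i := by
  induction s using Finset.cons_induction generalizing w m with
  | empty => simp at hws
  | cons j s hj ih =>
    rw [forall_mem_cons] at hw hy
    rw [sum_cons] at hws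
    rcases s.eq_empty_or_nonempty with rfl | ⟨i₀, hi₀⟩
    · simp only [sum_empty, add_zero] at hws
      simp only [sum_cons, sum_empty, prod_cons, prod_empty, hws, rpow_one]
      nlinarith
    set p := w j
    have hw_nonneg : ∀ i ∈ s, 0 ≤ w i := fun i hi => hm.le.trans (hw.2 i hi)
    have hmp : m ≤ 1 - p :=
      calc m ≤ w i₀ := hw.2 i₀ hi₀
        _ ≤ ∑ i ∈ s, w i := single_le_sum hw_nonneg hi₀
        _ = 1 - p := by linarith
    have hq : 0 < 1 - p := hm.trans_le hmp
    set v := fun i => w i / (1 - p)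
    have hv_mul : ∀ i, v i * (1 - p) = w i := fun i => div_mul_cancel₀ _ hq.ne'
    have hvs : ∑ i ∈ s, v i = 1 := by rw [← sum_div, div_eq_one_iff_eq hq.ne']; linarith
    have hv : ∀ i ∈ s, 0 ≤ v i := fun i hi => div_nonneg (hw_nonneg i hi) hq.le
    set ν := ∑ i ∈ s, v i * y i
    set S := ∑ i ∈ s, v i * y i ^ 2
    set G := ∏ i ∈ s, (y i ^ 2) ^ v i
    have hG : 0 ≤ G := prod_nonneg fun i hi => rpow_nonneg (sq_nonneg _) _
    have hGS : G ≤ S := geom_mean_le_arith_mean_weighted s v _ hv hvs fun i _ => sq_nonneg _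
    have hνS : (1 - p) * ν ^ 2 ≤ (1 - p - m) * S + m * √G ^ 2 := by
      have := ih (div_pos hm hq) (fun i hi => div_le_div_of_nonneg_right (hw.2 i hi) hq.le) hy.2 hvs
      rw [sq_sqrt hG]
      calc (1 - p) * ν ^ 2 ≤ (1 - p) * ((1 - m / (1 - p)) * S + m / (1 - p) * G) := by gcongr
        _ = _ := by field_simp
    have hstep := sq_mul_add_one_sub_mul_le hm hw.1 (by linarith) hy.1 (sqrt_nonneg G)
      (by rwa [sq_sqrt hG]) hνS
    have hsplit : ∀ f : ι → ℝ,
        ∑ i ∈ cons j s hj, w i * f i = p * f j + (1 - p) * ∑ i ∈ s, v i * f i := by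
      intro f
      rw [sum_cons, mul_sum]
      congr 1
      exact sum_congr rfl fun i _ => by rw [← hv_mul i]; ring
    have hprod : ∏ i ∈ cons j s hj, (y i ^ 2) ^ w i = (y j ^ 2) ^ p * G ^ (1 - p) := by
      rw [prod_cons, ← finsetProd_rpow _ _ fun i _ => rpow_nonneg (sq_nonneg _) _]
      congr 1
      refine prod_congr rfl fun i _ => ?_
      rw [← rpow_mul (sq_nonneg _), hv_mul]
    rw [hsplit, hsplit, hprod]
    rwa [sq_sqrt hG] at hstep

section
variable {ι : Type*} [Fintype ι]

theorem weightedVariance_add_sq (w y : ι → ℝ) (hw : ∑ i, w i = 1) (a : ℝ) :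
    weightedVariance w y + (∑ i, w i * y i - a) ^ 2 = ∑ i, w i * (y i - a) ^ 2 := by
  have : ∑ i, w i * (y i - a) ^ 2 =
      ∑ i, w i * y i ^ 2 - 2 * a * ∑ i, w i * y i + a ^ 2 * ∑ i, w i := by
    simp only [mul_sum, ← sum_sub_distrib, ← sum_add_distrib]
    exact sum_congr rfl fun i _ => by ring
  rw [this, hw, weightedVariance]
  ring

theorem weightedVariance_le_mul_of_le_mul {α β : ι → ℝ} {c : ℝ} (hαs : ∑ i, α i = 1)
    (hβs : ∑ i, β i = 1) (hc : ∀ i, α i ≤ c * β i) (y : ι → ℝ) :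
    weightedVariance α y ≤ c * weightedVariance β y := by
  set a := ∑ i, β i * y i
  calc weightedVariance α y ≤ ∑ i, α i * (y i - a) ^ 2 := by
        rw [← weightedVariance_add_sq α y hαs a]
        exact le_add_of_nonneg_right (sq_nonneg _)
    _ ≤ ∑ i, c * β i * (y i - a) ^ 2 := by gcongr with i; exact hc i
    _ = c * weightedVariance β y := by
        simp only [mul_assoc, ← mul_sum]
        rw [← weightedVariance_add_sq β y hβs a, sub_self]
        ring

theorem amgmGap_le_mul_of_le_mul {α β x : ι → ℝ} {c : ℝ} (hx : ∀ i, 0 ≤ x i)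
    (hβ : ∀ i, 0 < β i) (hαs : ∑ i, α i = 1) (hβs : ∑ i, β i = 1) (hc : ∀ i, α i ≤ c * β i) :
    amgmGap α x ≤ c * amgmGap β x := by
  have hc1 : 1 ≤ c := by
    simpa [hαs, hβs, ← mul_sum] using sum_le_sum fun i (_ : i ∈ univ) => hc i
  have hc0 : 0 < c := by linarith
  unfold amgmGap
  set P := ∏ i, x i ^ α i
  -- `Π x^β` is the geometric mean of the `x i` with weights `β i - α i / c` and of `P` with
  -- weight `1 / c`.
  let u : Option ι → ℝ := fun o => o.elim (1 / c) fun i => β i - α i / c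
  let z : Option ι → ℝ := fun o => o.elim P x
  have hamgm := geom_mean_le_arith_mean_weighted univ u z (by
      rintro (_ | i) _
      · exact div_nonneg zero_le_one hc0.le
      · simp only [u, Option.elim_some, sub_nonneg, div_le_iff₀' hc0]; exact hc i)
    (by simp [u, Fintype.sum_option, sum_sub_distrib, hβs, ← sum_div, hαs]) (by
      rintro (_ | i) _
      · exact prod_nonneg fun i _ => rpow_nonneg (hx i) _
      · exact hx i)
  have hgeom : ∏ o, z o ^ u o = ∏ i, x i ^ β i := by
    rw [Fintype.prod_option]
    simp only [z, u, Option.elim_none, Option.elim_some]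
    rw [← finsetProd_rpow _ _ fun i _ => rpow_nonneg (hx i) _, ← prod_mul_distrib]
    refine prod_congr rfl fun i _ => ?_
    rw [← rpow_mul (hx i), ← rpow_add' (hx i) (by ring_nf; exact (hβ i).ne')]
    congr 1; ring
  rw [hgeom, Fintype.sum_option] at hamgm
  simp only [z, u, Option.elim_none, Option.elim_some] at hamgm
  have hmean : c * ∑ i, (β i - α i / c) * x i = c * ∑ i, β i * x i - ∑ i, α i * x i := by
    rw [mul_sum, mul_sum, ← sum_sub_distrib]
    exact sum_congr rfl fun i _ => by field_simp
  have := mul_le_mul_of_nonneg_left hamgm hc0.le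
  rw [mul_add, ← mul_assoc, mul_one_div_cancel hc0.ne', one_mul, hmean] at this
  linarith

theorem weightedVariance_sqrt (w : ι → ℝ) {x : ι → ℝ} (hx : ∀ i, 0 ≤ x i) :
    weightedVariance w (fun i => √(x i)) = ∑ i, w i * x i - (∑ i, w i * √(x i)) ^ 2 := by
  simp only [weightedVariance, sq_sqrt (hx _)]

theorem amgmGap_le_weightedVariance_sqrt_div {w x : ι → ℝ} {m : ℝ} (hm : 0 < m)
    (hw : ∀ i, m ≤ w i) (hx : ∀ i, 0 ≤ x i) (hws : ∑ i, w i = 1) :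
    amgmGap w x ≤ weightedVariance w (fun i => √(x i)) / m := by
  have key := sq_sum_mul_le_of_le_weights univ hm (fun i _ => hw i)
    (fun i _ => sqrt_nonneg (x i)) hws
  simp only [sq_sqrt (hx _)] at key
  rw [le_div_iff₀ hm, weightedVariance_sqrt w hx, amgmGap]
  linarith

end

theorem amgm_gap_mixed_upper_bound_general (n : ℕ)
    (x α β : Fin n → ℝ) (hx : ∀ i, 0 ≤ x i)
    (hα : ∀ i, 0 < α i) (hαs : ∑ i, α i = 1)
    (hβ : ∀ i, 0 < β i) (hβs : ∑ i, β i = 1) :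
    ∑ i, α i * x i - ∏ i, x i ^ α i ≤
      (⨆ k, α k / β k) * min (1 / ⨅ i, α i) (1 / ⨅ i, β i) *
        (∑ i, β i * x i - (∑ i, β i * Real.sqrt (x i)) ^ 2) := by
  have : Nonempty (Fin n) := by
    by_contra h
    rw [not_nonempty_iff] at h
    simp at hαs
  set c := ⨆ k, α k / β k
  have hc : ∀ i, α i ≤ c * β i := fun i =>
    (div_le_iff₀ (hβ i)).1 (le_ciSup (Finite.bddAbove_range fun k => α k / β k) i)
  obtain ⟨a, ha⟩ := exists_eq_ciInf_of_finite (f := α)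
  obtain ⟨b, hb⟩ := exists_eq_ciInf_of_finite (f := β)
  have hαmin : 0 < ⨅ i, α i := ha ▸ hα a
  have hβmin : 0 < ⨅ i, β i := hb ▸ hβ b
  have hc0 : 0 ≤ c := by nlinarith [hc a, hα a, hβ a]
  rw [← weightedVariance_sqrt β hx]
  change amgmGap α x ≤ _
  rcases min_choice (1 / ⨅ i, α i) (1 / ⨅ i, β i) with h | h <;> rw [h]
  · calc amgmGap α x ≤ weightedVariance α (fun i => √(x i)) / ⨅ i, α i :=
          amgmGap_le_weightedVariance_sqrt_div hαmin (ciInf_le (Finite.bddBelow_range α)) hx hαs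
      _ ≤ c * weightedVariance β (fun i => √(x i)) / ⨅ i, α i := by
          gcongr; exact weightedVariance_le_mul_of_le_mul hαs hβs hc _
      _ = _ := by ring
  · calc amgmGap α x ≤ c * amgmGap β x := amgmGap_le_mul_of_le_mul hx hβ hαs hβs hc
      _ ≤ c * (weightedVariance β (fun i => √(x i)) / ⨅ i, β i) := by
          gcongr
          exact amgmGap_le_weightedVariance_sqrt_div hβmin
            (ciInf_le (Finite.bddBelow_range β)) hx hβs
      _ = _ := by ring

theorem amgm_gap_mixed_upper_bound (n : ℕ) (hn : 2 ≤ n)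
    (x α β : Fin n → ℝ) (hx : ∀ i, 0 ≤ x i)
    (hα : ∀ i, 0 < α i) (hαs : ∑ i, α i = 1)
    (hβ : ∀ i, 0 < β i) (hβs : ∑ i, β i = 1) :
    ∑ i, α i * x i - ∏ i, x i ^ α i ≤
      (⨆ k, α k / β k) * min (1 / ⨅ i, α i) (1 / ⨅ i, β i) *
        (∑ i, β i * x i - (∑ i, β i * Real.sqrt (x i)) ^ 2) :=
  amgm_gap_mixed_upper_bound_general n x α β hx hα hαs hβ hβs
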